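/- The simulation invariant is preserved: starting from a well-formed doubly-linked list state whose implementation configuration equals the TM configuration, after any number of simulation steps the state is still a well-formed doubly-linked list (pointers mutually inverse, acyclic, exactly one control), and its implementation configuration equals the TM configuration reached by the same number of TM transitions. -/

import Mathlib

inductive Dir | L | R

structure Cell (Γ L : Type*) where
  left : Option L
  right : Option L
  symbol : Γ

def followR {Γ L : Type*} (σ : L → Option (Cell Γ L)) : Option L → ℕ → Option L
  | ol, 0 => ol
  | ol, k + 1 => followR σ (ol.bind fun ℓ => (σ ℓ).bind Cell.right) k

def followL {Γ L : Type*} (σ : L → Option (Cell Γ L)) : Option L → ℕ → Option L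
  | ol, 0 => ol
  | ol, k + 1 => followL σ (ol.bind fun ℓ => (σ ℓ).bind Cell.left) k

def symAt {Γ L : Type*} (σ : L → Option (Cell Γ L)) (B : Γ) (ol : Option L) : Γ :=
  match ol.bind σ with
  | some c => c.symbol
  | none => B

def tapeOf {Γ L : Type*} (σ : L → Option (Cell Γ L)) (B : Γ) (h : L) : ℤ → Γ :=
  fun i =>
    if 0 ≤ i then symAt σ B (followR σ (some h) i.toNat)
    else symAt σ B (followL σ (some h) (-i).toNat)

def stepR {Γ L : Type*} [DecidableEq L] (σ : L → Option (Cell Γ L)) (B : Γ)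
    (h : L) (s' : Γ) (fresh : L) : (L → Option (Cell Γ L)) × L :=
  match σ h with
  | none => (σ, h)
  | some cl =>
    match cl.right with
    | some r => (Function.update σ h (some ⟨cl.left, cl.right, s'⟩), r)
    | none =>
      (Function.update (Function.update σ h (some ⟨cl.left, some fresh, s'⟩))
        fresh (some ⟨some h, none, B⟩), fresh)

def stepL {Γ L : Type*} [DecidableEq L] (σ : L → Option (Cell Γ L)) (B : Γ)
    (h : L) (s' : Γ) (fresh : L) : (L → Option (Cell Γ L)) × L :=
  match σ h with
  | none => (σ, h)
  | some cl =>
    match cl.left with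
    | some l => (Function.update σ h (some ⟨cl.left, cl.right, s'⟩), l)
    | none =>
      (Function.update (Function.update σ h (some ⟨some fresh, cl.right, s'⟩))
        fresh (some ⟨none, some h, B⟩), fresh)

/-- A simulation state: the cell map, the head label and the (unique) control state. -/
structure SimState (Q Γ L : Type*) where
  cells : L → Option (Cell Γ L)
  head : L
  st : Q

/-- Well-formedness: the cells form a finite acyclic doubly-linked chain (left/right
pointers mutually inverse), no other cells exist, and the head lies on the chain. -/
def WF {Q Γ L : Type*} (s : SimState Q Γ L) : Prop :=
  ∃ (n : ℕ) (c : Fin (n + 1) → L), Function.Injective c ∧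
    (∀ i : Fin (n + 1), ∃ sym : Γ, s.cells (c i) = some
      { left := if _ : i.val = 0 then none
                else some (c ⟨i.val - 1, by have := i.isLt; omega⟩),
        right := if _ : i.val = n then none
                 else some (c ⟨i.val + 1, by have := i.isLt; omega⟩),
        symbol := sym }) ∧
    (∀ ℓ : L, ℓ ∉ Set.range c → s.cells ℓ = none) ∧
    (∃ k : Fin (n + 1), s.head = c k)

/-- The implementation configuration read off a simulation state. -/
def implConfig {Q Γ L : Type*} (B : Γ) (s : SimState Q Γ L) : Q × (ℤ → Γ) :=
  (s.st, tapeOf s.cells B s.head)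

/-- One simulation step: perform the `δ`-directed update, choosing some fresh label. -/
def SimStep {Q Γ L : Type*} [DecidableEq L] (δ : Q × Γ → Option (Q × Γ × Dir)) (B : Γ)
    (s s' : SimState Q Γ L) : Prop :=
  ∃ q' sym D, δ (s.st, tapeOf s.cells B s.head 0) = some (q', sym, D) ∧
    ∃ fresh, s.cells fresh = none ∧
      s' = match D with
        | Dir.R => ⟨(stepR s.cells B s.head sym fresh).1,
                    (stepR s.cells B s.head sym fresh).2, q'⟩
        | Dir.L => ⟨(stepL s.cells B s.head sym fresh).1,
                    (stepL s.cells B s.head sym fresh).2, q'⟩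

def shiftTape {Γ : Type*} (D : Dir) (s' : Γ) (t : ℤ → Γ) : ℤ → Γ := fun i =>
  match D with
  | Dir.L => if i = 1 then s' else t (i - 1)
  | Dir.R => if i = -1 then s' else t (i + 1)

def TMStep {Q Γ : Type*} (δ : Q × Γ → Option (Q × Γ × Dir)) :
    Q × (ℤ → Γ) → Q × (ℤ → Γ) → Prop := fun c c' =>
  ∃ q' s' D, δ (c.1, c.2 0) = some (q', s', D) ∧ c' = (q', shiftTape D s' c.2)

/-!
A well-formed state is an injective labelling `c : ℤ → L` of an integer interval `[a, b]`
containing the head position `p`, where cell `c i` points to `c (i - 1)` and `c (i + 1)` and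
carries the symbol `f i`; the tape it represents is `f` on `[a, b]`, blank outside, read from `p`.
A right move inside the chain overwrites `f p` and moves to `p + 1`. At the right end, `stepR`
is the same as first appending a fresh blank cell, which changes neither well-formedness nor the
tape, and then moving inside the longer chain. Left moves are right moves of the mirrored cell
map (pointers swapped, indices negated). As TM steps are deterministic, induction on the number of
steps concludes.
-/

open Function Set

namespace Cell

variable {Γ L : Type*}

def swap (x : Cell Γ L) : Cell Γ L := ⟨x.right, x.left, x.symbol⟩

@[simp] lemma swap_comp_swap : swap ∘ swap = (id : Cell Γ L → Cell Γ L) := rfl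

end Cell

section Mirror

variable {Γ L : Type*}

def mirrorCells (σ : L → Option (Cell Γ L)) : L → Option (Cell Γ L) := Option.map Cell.swap ∘ σ

@[simp] lemma mirrorCells_mirrorCells (σ : L → Option (Cell Γ L)) :
    mirrorCells (mirrorCells σ) = σ := by
  simp [mirrorCells, ← Function.comp_assoc, Option.map_comp_map]

lemma mirrorCells_update [DecidableEq L] (σ : L → Option (Cell Γ L)) (ℓ : L)
    (v : Option (Cell Γ L)) :
    mirrorCells (update σ ℓ v) = update (mirrorCells σ) ℓ (v.map Cell.swap) :=
  comp_update _ _ _ _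

lemma followL_eq_followR_mirrorCells (σ : L → Option (Cell Γ L)) (o : Option L) (m : ℕ) :
    followL σ o m = followR (mirrorCells σ) o m := by
  induction m generalizing o with
  | zero => rfl
  | succ m ih =>
    simp only [followL, followR, ih]
    congr 1
    cases o <;> simp [mirrorCells, Option.bind_map, Function.comp_def, Cell.swap]

lemma stepL_eq_mirrorCells_stepR [DecidableEq L] (σ : L → Option (Cell Γ L)) (B : Γ) (h : L)
    (sym : Γ) (fresh : L) :
    stepL σ B h sym fresh =
      (mirrorCells (stepR (mirrorCells σ) B h sym fresh).1,
        (stepR (mirrorCells σ) B h sym fresh).2) := by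
  unfold stepL stepR
  cases hσ : σ h with
  | none =>
    have hσ' : mirrorCells σ h = none := by simp [mirrorCells, hσ]
    simp [hσ']
  | some cl =>
    have hσ' : mirrorCells σ h = some cl.swap := by simp [mirrorCells, hσ]
    cases hl : cl.left <;> simp [hσ', mirrorCells_update, Cell.swap, hl]

end Mirror

section Chain

variable {Γ L : Type*}

def chainCell (a b : ℤ) (c : ℤ → L) (f : ℤ → Γ) (i : ℤ) : Cell Γ L :=
  ⟨if i = a then none else some (c (i - 1)), if i = b then none else some (c (i + 1)), f i⟩

structure IsCellChain (σ : L → Option (Cell Γ L)) (a b : ℤ) (c : ℤ → L) (f : ℤ → Γ) : Prop where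
  injOn : InjOn c (Icc a b)
  cell : ∀ i ∈ Icc a b, σ (c i) = some (chainCell a b c f i)
  eq_none : ∀ ℓ ∉ c '' Icc a b, σ ℓ = none

def chainTape (a b : ℤ) (f : ℤ → Γ) (B : Γ) (i : ℤ) : Γ :=
  if a ≤ i ∧ i ≤ b then f i else B

variable {σ : L → Option (Cell Γ L)} {a b : ℤ} {c : ℤ → L} {f : ℤ → Γ}

lemma IsCellChain.mirror (h : IsCellChain σ a b c f) :
    IsCellChain (mirrorCells σ) (-b) (-a) (fun i => c (-i)) (fun i => f (-i)) where
  injOn i hi j hj hij :=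
    neg_injective <| h.injOn (by simp at hi ⊢; omega) (by simp at hj ⊢; omega) hij
  cell i hi := by
    rw [mirrorCells, comp_apply, h.cell (-i) (by simp at hi ⊢; omega)]
    simp only [chainCell, Cell.swap, Option.map_some, neg_eq_iff_eq_neg, neg_sub, neg_add',
      neg_add_eq_sub]
  eq_none ℓ hℓ := by
    rw [mirrorCells, comp_apply, h.eq_none ℓ ?_, Option.map_none]
    rintro ⟨i, hi, rfl⟩
    exact hℓ ⟨-i, by simp at hi ⊢; omega, by simp⟩

lemma chainTape_neg (a b : ℤ) (f : ℤ → Γ) (B : Γ) (i : ℤ) :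
    chainTape (-b) (-a) (fun j => f (-j)) B i = chainTape a b f B (-i) := by
  unfold chainTape
  congr 1
  apply propext
  omega

lemma followR_none (σ : L → Option (Cell Γ L)) (m : ℕ) : followR σ none m = none := by
  induction m with
  | zero => rfl
  | succ m ih => exact ih

lemma IsCellChain.followR_eq (h : IsCellChain σ a b c f) (m : ℕ) {i : ℤ} (hi : i ∈ Icc a b) :
    followR σ (some (c i)) m = if i + m ≤ b then some (c (i + m)) else none := by
  induction m generalizing i with
  | zero => simp [_root_.followR, hi.2]
  | succ m ih =>
    obtain ⟨hai, hib⟩ := hi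
    simp only [_root_.followR, Option.bind_some, h.cell i ⟨hai, hib⟩, chainCell]
    split_ifs with hend hle hle
    · omega
    · exact followR_none σ m
    · rw [ih ⟨by omega, by omega⟩, if_pos (by omega)]
      push_cast
      ring_nf
    · rw [ih ⟨by omega, by omega⟩, if_neg (by omega)]

lemma IsCellChain.followL_eq (h : IsCellChain σ a b c f) (m : ℕ) {i : ℤ} (hi : i ∈ Icc a b) :
    followL σ (some (c i)) m = if a ≤ i - m then some (c (i - m)) else none := by
  have := h.mirror.followR_eq m (i := -i) (by simp at hi ⊢; omega)
  simp only [neg_neg, neg_add_eq_sub, neg_sub] at this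
  rw [followL_eq_followR_mirrorCells, this]
  split_ifs <;> first | rfl | omega

lemma IsCellChain.symAt_eq (h : IsCellChain σ a b c f) (B : Γ) {i : ℤ} (hi : i ∈ Icc a b) :
    symAt σ B (some (c i)) = f i := by
  simp [symAt, h.cell i hi, chainCell]

lemma IsCellChain.tapeOf_eq (h : IsCellChain σ a b c f) (B : Γ) {p : ℤ} (hp : p ∈ Icc a b) :
    tapeOf σ B (c p) = fun i => chainTape a b f B (p + i) := by
  obtain ⟨hap, hpb⟩ := hp
  funext i
  by_cases hi : 0 ≤ i
  · rw [tapeOf, if_pos hi, h.followR_eq _ ⟨hap, hpb⟩, chainTape, Int.toNat_of_nonneg hi]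
    split_ifs with hle hmem hmem
    · exact h.symAt_eq B ⟨by omega, hle⟩
    · omega
    · omega
    · rfl
  · rw [tapeOf, if_neg hi, h.followL_eq _ ⟨hap, hpb⟩, chainTape, Int.toNat_of_nonneg (by omega),
      sub_neg_eq_add]
    split_ifs with hle hmem hmem
    · exact h.symAt_eq B ⟨hle, by omega⟩
    · omega
    · omega
    · rfl

lemma IsCellChain.ne_of_eq_none (h : IsCellChain σ a b c f) {ℓ : L} (hℓ : σ ℓ = none) {i : ℤ}
    (hi : i ∈ Icc a b) : c i ≠ ℓ := by
  rintro rfl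
  simp [h.cell i hi] at hℓ

end Chain

section Step

variable {Γ L : Type*} [DecidableEq L]
variable {σ : L → Option (Cell Γ L)} {a b : ℤ} {c : ℤ → L} {f : ℤ → Γ}

lemma chainTape_update {p : ℤ} (hp : p ∈ Icc a b) (f : ℤ → Γ) (B sym : Γ) :
    chainTape a b (update f p sym) B = update (chainTape a b f B) p sym := by
  funext i
  by_cases hip : i = p
  · subst hip
    simp [chainTape, hp.1, hp.2]
  · simp [chainTape, update_of_ne hip]

lemma chainTape_update_succ (a b : ℤ) (f : ℤ → Γ) (B : Γ) :
    chainTape a (b + 1) (update f (b + 1) B) B = chainTape a b f B := by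
  funext i
  by_cases hi : i = b + 1
  · simp [chainTape, hi]
  · simp only [chainTape, update_of_ne hi]
    split_ifs <;> first | rfl | omega

lemma IsCellChain.update_symbol (h : IsCellChain σ a b c f) {p : ℤ} (hp : p ∈ Icc a b) (sym : Γ) :
    IsCellChain (update σ (c p) (some (chainCell a b c (update f p sym) p))) a b c
      (update f p sym) where
  injOn := h.injOn
  cell i hi := by
    by_cases hip : i = p
    · rw [hip, update_self]
    · rw [update_of_ne (fun e => hip (h.injOn hi hp e)), h.cell i hi]
      simp [chainCell, update_of_ne hip]
  eq_none ℓ hℓ := by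
    rw [update_of_ne (fun e => hℓ ⟨p, hp, e.symm⟩), h.eq_none ℓ hℓ]

lemma IsCellChain.stepR_of_lt (h : IsCellChain σ a b c f) {p : ℤ} (hap : a ≤ p) (hpb : p < b)
    (B sym : Γ) (fresh : L) :
    IsCellChain (stepR σ B (c p) sym fresh).1 a b c (update f p sym) ∧
      (stepR σ B (c p) sym fresh).2 = c (p + 1) := by
  have hstep : stepR σ B (c p) sym fresh =
      (update σ (c p) (some (chainCell a b c (update f p sym) p)), c (p + 1)) := by
    simp [stepR, h.cell p ⟨hap, hpb.le⟩, chainCell, hpb.ne]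
  rw [hstep]
  exact ⟨h.update_symbol ⟨hap, hpb.le⟩ sym, rfl⟩

lemma stepR_eq_stepR_append {h : L} {cl : Cell Γ L} (hσ : σ h = some cl) (hr : cl.right = none)
    {fresh : L} (hfresh : h ≠ fresh) (B sym : Γ) :
    stepR σ B h sym fresh =
      stepR (update (update σ h (some ⟨cl.left, some fresh, cl.symbol⟩)) fresh
        (some ⟨some h, none, B⟩)) B h sym fresh := by
  simp [stepR, hσ, hr, update_of_ne hfresh, update_comm hfresh]

lemma IsCellChain.append (h : IsCellChain σ a b c f) (hab : a ≤ b) {fresh : L}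
    (hfresh : σ fresh = none) (B : Γ) :
    IsCellChain (update (update σ (c b) (some ⟨(chainCell a b c f b).left, some fresh, f b⟩))
      fresh (some ⟨some (c b), none, B⟩)) a (b + 1) (update c (b + 1) fresh)
      (update f (b + 1) B) where
  injOn i hi j hj hij := by
    obtain ⟨hai, hib⟩ := hi
    obtain ⟨haj, hjb⟩ := hj
    rcases eq_or_ne i (b + 1) with rfl | hi' <;> rcases eq_or_ne j (b + 1) with rfl | hj'
    · rfl
    · rw [update_self, update_of_ne hj'] at hij
      exact absurd hij.symm (h.ne_of_eq_none hfresh ⟨haj, by omega⟩)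
    · rw [update_self, update_of_ne hi'] at hij
      exact absurd hij (h.ne_of_eq_none hfresh ⟨hai, by omega⟩)
    · rw [update_of_ne hi', update_of_ne hj'] at hij
      exact h.injOn ⟨hai, by omega⟩ ⟨haj, by omega⟩ hij
  cell i hi := by
    obtain ⟨hai, hib⟩ := hi
    rcases eq_or_ne i (b + 1) with rfl | hi'
    · simp [chainCell, show b + 1 ≠ a by omega]
    rw [update_of_ne hi', update_of_ne (h.ne_of_eq_none hfresh ⟨hai, by omega⟩)]
    rcases eq_or_ne i b with rfl | hib'
    · simp [chainCell, update_of_ne (show i - 1 ≠ i + 1 by omega)]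
    rw [update_of_ne (fun e => hib' (h.injOn ⟨hai, by omega⟩ ⟨hab, le_rfl⟩ e)),
      h.cell i ⟨hai, by omega⟩]
    simp [chainCell, hib', hi', update_of_ne (show i - 1 ≠ b + 1 by omega)]
  eq_none ℓ hℓ := by
    have hne : ∀ i ∈ Icc a (b + 1), update c (b + 1) fresh i ≠ ℓ := fun i hi e => hℓ ⟨i, hi, e⟩
    have h₁ := hne (b + 1) ⟨by omega, le_rfl⟩
    have h₂ := hne b ⟨hab, by omega⟩
    rw [update_self] at h₁
    rw [update_of_ne (by omega)] at h₂
    rw [update_of_ne h₁.symm, update_of_ne h₂.symm]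
    refine h.eq_none ℓ ?_
    rintro ⟨i, hi, rfl⟩
    exact hne i ⟨hi.1, by have := hi.2; omega⟩ (update_of_ne (by have := hi.2; omega) _ _)

lemma IsCellChain.stepR (h : IsCellChain σ a b c f) {p : ℤ} (hp : p ∈ Icc a b) {fresh : L}
    (hfresh : σ fresh = none) (B sym : Γ) :
    ∃ b' c' f', IsCellChain (stepR σ B (c p) sym fresh).1 a b' c' f' ∧ p + 1 ∈ Icc a b' ∧
      (stepR σ B (c p) sym fresh).2 = c' (p + 1) ∧
      chainTape a b' f' B = update (chainTape a b f B) p sym := by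
  obtain ⟨hap, hpb⟩ := hp
  rcases hpb.lt_or_eq with hpb | rfl
  · obtain ⟨hchain, hhead⟩ := h.stepR_of_lt hap hpb B sym fresh
    exact ⟨b, c, update f p sym, hchain, ⟨by omega, by omega⟩, hhead,
      chainTape_update ⟨hap, hpb.le⟩ f B sym⟩
  · have happ := h.append hap hfresh B
    obtain ⟨hchain, hhead⟩ := happ.stepR_of_lt hap (lt_add_one p) B sym fresh
    rw [update_of_ne (by omega)] at hchain hhead
    rw [stepR_eq_stepR_append (h.cell p ⟨hap, le_rfl⟩) (by simp [chainCell])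
      (h.ne_of_eq_none hfresh ⟨hap, le_rfl⟩)]
    refine ⟨p + 1, _, _, hchain, ⟨by omega, le_rfl⟩, hhead, ?_⟩
    rw [chainTape_update ⟨hap, by omega⟩, chainTape_update_succ]

lemma IsCellChain.stepL (h : IsCellChain σ a b c f) {p : ℤ} (hp : p ∈ Icc a b) {fresh : L}
    (hfresh : σ fresh = none) (B sym : Γ) :
    ∃ a' c' f', IsCellChain (stepL σ B (c p) sym fresh).1 a' b c' f' ∧ p - 1 ∈ Icc a' b ∧
      (stepL σ B (c p) sym fresh).2 = c' (p - 1) ∧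
      chainTape a' b f' B = update (chainTape a b f B) p sym := by
  have hfresh' : mirrorCells σ fresh = none := by simp [mirrorCells, hfresh]
  obtain ⟨b', c', f', hchain, hp', hhead, htape⟩ :=
    h.mirror.stepR (p := -p) (by simp at hp ⊢; omega) hfresh' B sym
  simp only [neg_neg] at hchain hhead htape
  rw [stepL_eq_mirrorCells_stepR]
  refine ⟨-b', fun i => c' (-i), fun i => f' (-i), ?_, ?_, ?_, ?_⟩
  · simpa using hchain.mirror
  · simp at hp' ⊢; omega
  · simp [hhead, neg_add_eq_sub]
  · funext i
    have := chainTape_neg (-b) b' f' B i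
    rw [neg_neg] at this
    rw [this, htape]
    by_cases hi : i = p
    · simp [hi]
    · rw [update_of_ne (neg_injective.ne hi), update_of_ne hi, chainTape_neg, neg_neg]

end Step

section Simulation

variable {Q Γ L : Type*}

lemma WF.exists_isCellChain {s : SimState Q Γ L} (hwf : WF s) :
    ∃ a b c f p, IsCellChain s.cells a b c f ∧ p ∈ Icc a b ∧ s.head = c p := by
  obtain ⟨n, c, hinj, hcell, hnone, k, hk⟩ := hwf
  choose f hf using hcell
  let idx : ℤ → Fin (n + 1) := fun i => Fin.ofNat (n + 1) i.toNat
  have hidx : ∀ j : Fin (n + 1), idx j = j := fun j => by simp [idx]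
  have hidx_val : ∀ i ∈ Icc (0 : ℤ) n, (idx i : ℕ) = i.toNat := fun i hi => by
    simp only [idx, Fin.val_ofNat]
    exact Nat.mod_eq_of_lt (by have := hi.2; omega)
  have hsurj : ∀ i ∈ Icc (0 : ℤ) n, ∃ j : Fin (n + 1), (j : ℤ) = i := fun i hi =>
    ⟨⟨i.toNat, by have := hi.2; omega⟩, by simp [hi.1]⟩
  refine ⟨0, n, c ∘ idx, f ∘ idx, k, ⟨?_, ?_, ?_⟩, ⟨by omega, by omega⟩, by simp [hidx, hk]⟩
  · intro i hi i' hi' e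
    obtain ⟨j, rfl⟩ := hsurj i hi
    obtain ⟨j', rfl⟩ := hsurj i' hi'
    simp only [comp_apply, hidx] at e
    rw [hinj e]
  · intro i hi
    obtain ⟨j, rfl⟩ := hsurj i hi
    simp only [comp_apply, hidx, hf j, chainCell]
    have := j.isLt
    congr 2 <;> split_ifs <;> first | rfl | omega |
      exact congrArg (some ∘ c)
        (Fin.ext (by rw [hidx_val _ ⟨by omega, by omega⟩]; dsimp only; omega))
  · intro ℓ hℓ
    refine hnone ℓ ?_
    rintro ⟨j, rfl⟩
    exact hℓ ⟨j, ⟨by omega, by omega⟩, by simp [hidx]⟩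

lemma wf_of_isCellChain {s : SimState Q Γ L} {a b p : ℤ} {c : ℤ → L} {f : ℤ → Γ}
    (h : IsCellChain s.cells a b c f) (hp : p ∈ Icc a b) (hhead : s.head = c p) : WF s := by
  obtain ⟨hap, hpb⟩ := hp
  have hmem : ∀ j : Fin ((b - a).toNat + 1), a + (j : ℕ) ∈ Icc a b := fun j =>
    ⟨by omega, by have := j.isLt; omega⟩
  refine ⟨(b - a).toNat, fun j => c (a + j), fun j j' e => ?_, fun j => ⟨f (a + j), ?_⟩,
    fun ℓ hℓ => h.eq_none ℓ ?_, ⟨⟨(p - a).toNat, by omega⟩, ?_⟩⟩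
  · have := h.injOn (hmem j) (hmem j') e
    exact Fin.ext (by omega)
  · rw [h.cell _ (hmem j), chainCell]
    have := j.isLt
    congr 2 <;> split_ifs <;> first | rfl | omega | (congr 2; push_cast; omega)
  · rintro ⟨i, hi, rfl⟩
    exact hℓ ⟨⟨(i - a).toNat, by have := hi.1; have := hi.2; omega⟩,
      congrArg c (by have := hi.1; dsimp only; omega)⟩
  · rw [hhead]
    exact congrArg c (by dsimp only; omega)

lemma shiftTape_R_eq (w : ℤ → Γ) (p : ℤ) (sym : Γ) :
    shiftTape Dir.R sym (fun i => w (p + i)) = fun i => update w p sym (p + 1 + i) := by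
  funext i
  by_cases hi : i = -1
  · simp [shiftTape, hi]
  · rw [shiftTape, if_neg hi, update_of_ne (by omega)]
    ring_nf

lemma shiftTape_L_eq (w : ℤ → Γ) (p : ℤ) (sym : Γ) :
    shiftTape Dir.L sym (fun i => w (p + i)) = fun i => update w p sym (p - 1 + i) := by
  funext i
  by_cases hi : i = 1
  · simp [shiftTape, hi]
  · rw [shiftTape, if_neg hi, update_of_ne (by omega)]
    ring_nf

lemma tmStep_rightUnique (δ : Q × Γ → Option (Q × Γ × Dir)) : Relator.RightUnique (TMStep δ) := by
  rintro _ _ _ ⟨q₁, s₁, D₁, h₁, rfl⟩ ⟨q₂, s₂, D₂, h₂, rfl⟩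
  obtain ⟨rfl, rfl, rfl⟩ : q₁ = q₂ ∧ s₁ = s₂ ∧ D₁ = D₂ := by simpa [h₁] using h₂
  rfl

lemma SimStep.wf_and_tmStep [DecidableEq L] {δ : Q × Γ → Option (Q × Γ × Dir)} {B : Γ}
    {s s' : SimState Q Γ L} (hs : SimStep δ B s s') (hwf : WF s) :
    WF s' ∧ TMStep δ (implConfig B s) (implConfig B s') := by
  obtain ⟨q', sym, D, hδ, fresh, hfresh, rfl⟩ := hs
  obtain ⟨a, b, c, f, p, hchain, hp, hhead⟩ := hwf.exists_isCellChain
  rw [hhead]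
  cases D
  · obtain ⟨a', c', f', hchain', hp', hhead', htape⟩ := hchain.stepL hp hfresh B sym
    refine ⟨wf_of_isCellChain hchain' hp' hhead',
      q', sym, Dir.L, hδ, ?_⟩
    simp only [implConfig, hhead', hhead, hchain'.tapeOf_eq B hp', hchain.tapeOf_eq B hp, htape,
      shiftTape_L_eq]
  · obtain ⟨b', c', f', hchain', hp', hhead', htape⟩ := hchain.stepR hp hfresh B sym
    refine ⟨wf_of_isCellChain hchain' hp' hhead',
      q', sym, Dir.R, hδ, ?_⟩
    simp only [implConfig, hhead', hhead, hchain'.tapeOf_eq B hp', hchain.tapeOf_eq B hp, htape,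
      shiftTape_R_eq]

end Simulation

/-- the simulation invariant is preserved: starting from a well-formed
linked-list state whose implementation configuration equals the TM configuration,
after any number `k` of simulation steps the state is still well-formed and its
implementation configuration equals the TM configuration after `k` TM transitions. -/
theorem simulation_invariant {Q Γ L : Type*} [DecidableEq L]
    (δ : Q × Γ → Option (Q × Γ × Dir)) (B : Γ) (k : ℕ)
    (ss : ℕ → SimState Q Γ L) (tc : ℕ → Q × (ℤ → Γ))
    (hWF : WF (ss 0)) (hconf : implConfig B (ss 0) = tc 0)
    (hsim : ∀ i < k, SimStep δ B (ss i) (ss (i + 1)))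
    (htm : ∀ i < k, TMStep δ (tc i) (tc (i + 1))) :
    WF (ss k) ∧ implConfig B (ss k) = tc k := by
  induction k with
  | zero => exact ⟨hWF, hconf⟩
  | succ m ih =>
    obtain ⟨hwf, hcfg⟩ := ih (fun i hi => hsim i (by omega)) (fun i hi => htm i (by omega))
    obtain ⟨hwf', hstep⟩ := (hsim m (by omega)).wf_and_tmStep hwf
    rw [hcfg] at hstep
    exact ⟨hwf', tmStep_rightUnique δ hstep (htm m (by omega))⟩
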